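/- Let $F$ be a graph and $u \in V(F)$ a vertex with $d_F(u) = \delta(F)$. If no subgraph $F' \subseteq F$ containing $u$ satisfies $e_{F'}/(v_{F'}-1) = m_1(F)$, then $F$ contains an edge with at most one endpoint in the closed neighborhood $N_F[u]$. -/

import Mathlib

/-!
Suppose every edge of `F` lies inside `N_F[u]`. If `F` has no edges, the one-vertex subgraph
`{u}` has density `0 / 0 = 0 = m₁(F)` (junk values on both sides). Otherwise take a subgraph `H`
of density `m₁(F)`; dropping its isolated vertices keeps its edges and cannot lower its density,
so every vertex of `H` lies on an edge and hence in `N_F[u]`. Either `u ∈ H`, or `H ⊆ N_F(u)` and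
the cone over `H` with apex `u` has density `(e + v) / v ≥ e / (v - 1)`, as `e ≤ v (v - 1) / 2`.
-/

open SimpleGraph

/-- The 1-density `e_H / (v_H - 1)` of a subgraph. -/
noncomputable def subDensity {V : Type*} {F : SimpleGraph V} (H : F.Subgraph) : ℝ :=
  (H.edgeSet.ncard : ℝ) / ((H.verts.ncard : ℝ) - 1)

/-- `m₁(F) = max { e_{F'}/(v_{F'}-1) : F' ⊆ F, v_{F'} ≥ 2 }`. -/
noncomputable def m1 {V : Type*} (F : SimpleGraph V) : ℝ :=
  sSup {d : ℝ | ∃ H : F.Subgraph, 2 ≤ H.verts.ncard ∧ d = subDensity H}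

namespace SimpleGraph.Subgraph

variable {V : Type*} {G : SimpleGraph V}

lemma ncard_edgeSet_le_choose_two [Finite V] (H : G.Subgraph) :
    H.edgeSet.ncard ≤ H.verts.ncard.choose 2 := by
  classical
  have := Fintype.ofFinite V
  calc H.edgeSet.ncard = (Sym2.map Subtype.val '' H.coe.edgeSet).ncard := by
        rw [image_coe_edgeSet_coe]
    _ ≤ H.coe.edgeSet.ncard := Set.ncard_image_le H.coe.edgeSet.toFinite
    _ = H.coe.edgeFinset.card := by rw [← coe_edgeFinset, Set.ncard_coe_finset]
    _ ≤ (Fintype.card H.verts).choose 2 := card_edgeFinset_le_card_choose_two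
    _ = H.verts.ncard.choose 2 := by rw [← Nat.card_eq_fintype_card, Nat.card_coe_set_eq]

lemma edgeSet_induce_support (H : G.Subgraph) : (H.induce H.support).edgeSet = H.edgeSet := by
  ext e
  induction e using Sym2.ind with
  | _ a b =>
    rw [Subgraph.mem_edgeSet, Subgraph.mem_edgeSet, induce_adj]
    exact ⟨fun h => h.2.2, fun h => ⟨⟨b, h⟩, ⟨a, h.symm⟩, h⟩⟩

lemma two_le_ncard_support [Finite V] {H : G.Subgraph} (h : H.edgeSet.Nonempty) :
    2 ≤ H.support.ncard := by
  obtain ⟨e, he⟩ := h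
  induction e using Sym2.ind with
  | _ a b =>
    rw [Subgraph.mem_edgeSet] at he
    rw [← Set.ncard_pair (H.adj_sub he).ne]
    refine Set.ncard_le_ncard ?_ (Set.toFinite _)
    rw [Set.insert_subset_iff, Set.singleton_subset_iff]
    exact ⟨⟨b, he⟩, ⟨a, he.symm⟩⟩

lemma notMem_verts_of_forall_adj {H : G.Subgraph} {u : V} (hu : ∀ x ∈ H.verts, G.Adj u x) :
    u ∉ H.verts := fun h => G.irrefl (hu u h)

def cone (H : G.Subgraph) (u : V) (hu : ∀ x ∈ H.verts, G.Adj u x) : G.Subgraph where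
  verts := insert u H.verts
  Adj a b := H.Adj a b ∨ (a = u ∧ b ∈ H.verts) ∨ (b = u ∧ a ∈ H.verts)
  adj_sub := by
    rintro a b (h | ⟨rfl, hb⟩ | ⟨rfl, ha⟩)
    exacts [H.adj_sub h, hu _ hb, (hu _ ha).symm]
  edge_vert := by
    rintro a b (h | ⟨rfl, hb⟩ | ⟨rfl, ha⟩)
    exacts [Set.mem_insert_of_mem _ (H.edge_vert h), Set.mem_insert _ _,
      Set.mem_insert_of_mem _ ha]
  symm := by
    constructor
    rintro a b (h | ⟨rfl, hb⟩ | ⟨rfl, ha⟩)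
    exacts [Or.inl h.symm, Or.inr (Or.inr ⟨rfl, hb⟩), Or.inr (Or.inl ⟨rfl, ha⟩)]

section cone

variable (H : G.Subgraph) (u : V) (hu : ∀ x ∈ H.verts, G.Adj u x)

lemma edgeSet_cone : (H.cone u hu).edgeSet = H.edgeSet ∪ (fun x => s(u, x)) '' H.verts := by
  ext e
  induction e using Sym2.ind with
  | _ a b =>
    simp only [Subgraph.mem_edgeSet, Set.mem_union, Set.mem_image]
    constructor
    · rintro (h | ⟨rfl, hb⟩ | ⟨rfl, ha⟩)
      exacts [Or.inl h, Or.inr ⟨b, hb, rfl⟩, Or.inr ⟨a, ha, Sym2.eq_swap⟩]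
    · rintro (h | ⟨x, hx, hxe⟩)
      · exact Or.inl h
      · rcases Sym2.eq_iff.mp hxe with ⟨rfl, rfl⟩ | ⟨rfl, rfl⟩
        exacts [Or.inr (Or.inl ⟨rfl, hx⟩), Or.inr (Or.inr ⟨rfl, hx⟩)]

variable [Finite V]

lemma ncard_verts_cone : (H.cone u hu).verts.ncard = H.verts.ncard + 1 :=
  Set.ncard_insert_of_notMem (notMem_verts_of_forall_adj hu) H.verts.toFinite

lemma ncard_edgeSet_cone :
    (H.cone u hu).edgeSet.ncard = H.edgeSet.ncard + H.verts.ncard := by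
  have hdisj : Disjoint H.edgeSet ((fun x => s(u, x)) '' H.verts) := by
    rw [Set.disjoint_right]
    rintro e ⟨x, -, rfl⟩ he
    exact notMem_verts_of_forall_adj hu (H.edge_vert he)
  rw [edgeSet_cone, Set.ncard_union_eq hdisj H.edgeSet.toFinite (H.verts.toFinite.image _),
    Set.InjOn.ncard_image fun x _ y _ h => Sym2.congr_right.mp h]

end cone

end SimpleGraph.Subgraph

open SimpleGraph.Subgraph

section density

variable {V : Type*} {F : SimpleGraph V}

lemma subDensity_singletonSubgraph (u : V) : subDensity (F.singletonSubgraph u) = 0 := by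
  simp [subDensity, edgeSet_singletonSubgraph]

lemma subDensity_le_of_ncard_edgeSet_eq {H K : F.Subgraph}
    (he : H.edgeSet.ncard = K.edgeSet.ncard) (hK : 2 ≤ K.verts.ncard)
    (hv : K.verts.ncard ≤ H.verts.ncard) : subDensity H ≤ subDensity K := by
  have hK' : (2 : ℝ) ≤ K.verts.ncard := by exact_mod_cast hK
  have hv' : (K.verts.ncard : ℝ) ≤ H.verts.ncard := by exact_mod_cast hv
  rw [subDensity, subDensity, he]
  exact div_le_div_of_nonneg_left (by positivity) (by linarith) (by linarith)

lemma subDensity_le_subDensity_induce_support [Finite V] (H : F.Subgraph)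
    (h : H.edgeSet.Nonempty) : subDensity H ≤ subDensity (H.induce H.support) :=
  subDensity_le_of_ncard_edgeSet_eq (by rw [edgeSet_induce_support]) (two_le_ncard_support h)
    (Set.ncard_le_ncard H.support_subset_verts H.verts.toFinite)

lemma subDensity_le_subDensity_cone [Finite V] (H : F.Subgraph) (u : V)
    (hu : ∀ x ∈ H.verts, F.Adj u x) (h2 : 2 ≤ H.verts.ncard) :
    subDensity H ≤ subDensity (H.cone u hu) := by
  have hE : (H.edgeSet.ncard : ℝ) ≤ H.verts.ncard * (H.verts.ncard - 1) / 2 := by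
    rw [← Nat.cast_choose_two]
    exact_mod_cast H.ncard_edgeSet_le_choose_two
  have hv : (2 : ℝ) ≤ H.verts.ncard := by exact_mod_cast h2
  rw [subDensity, subDensity, ncard_verts_cone, ncard_edgeSet_cone,
    div_le_div_iff₀ (by linarith) (by push_cast; linarith)]
  push_cast
  nlinarith

end density

section m1

variable {V : Type*} {F : SimpleGraph V}

lemma m1_bot : m1 (⊥ : SimpleGraph V) = 0 := by
  have hsub : {d : ℝ | ∃ H : (⊥ : SimpleGraph V).Subgraph, 2 ≤ H.verts.ncard ∧
      d = subDensity H} ⊆ {0} := by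
    rintro d ⟨H, -, rfl⟩
    have : H.edgeSet = ∅ := Set.subset_empty_iff.mp <| by
      simpa using H.edgeSet_subset
    simp [subDensity, this]
  rcases Set.subset_singleton_iff_eq.mp hsub with h | h <;> simp [m1, h]

variable [Finite V]

lemma finite_m1_set :
    {d : ℝ | ∃ H : F.Subgraph, 2 ≤ H.verts.ncard ∧ d = subDensity H}.Finite := by
  have : Finite F.Subgraph :=
    Finite.of_injective (fun H : F.Subgraph => (H.verts, H.Adj))
      fun H K h => Subgraph.ext (congrArg Prod.fst h) (congrArg Prod.snd h)
  refine (Set.finite_range (subDensity (F := F))).subset ?_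
  rintro d ⟨H, -, rfl⟩
  exact ⟨H, rfl⟩

lemma subDensity_le_m1 (H : F.Subgraph) (h : 2 ≤ H.verts.ncard) : subDensity H ≤ m1 F :=
  le_csSup finite_m1_set.bddAbove ⟨H, h, rfl⟩

lemma exists_subDensity_eq_m1 [Nontrivial V] :
    ∃ H : F.Subgraph, 2 ≤ H.verts.ncard ∧ subDensity H = m1 F := by
  have hne : {d : ℝ | ∃ H : F.Subgraph, 2 ≤ H.verts.ncard ∧ d = subDensity H}.Nonempty :=
    ⟨_, ⊤, by rw [verts_top, Set.ncard_univ]; exact Finite.one_lt_card, rfl⟩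
  obtain ⟨H, h2, hH⟩ := hne.csSup_mem finite_m1_set
  exact ⟨H, h2, hH.symm⟩

lemma one_le_m1 {a b : V} (hab : F.Adj a b) : 1 ≤ m1 F := by
  have h2 : (F.subgraphOfAdj hab).verts.ncard = 2 := by
    rw [subgraphOfAdj_verts, Set.ncard_pair hab.ne]
  refine le_of_eq_of_le ?_ (subDensity_le_m1 _ h2.ge)
  rw [subDensity, edgeSet_subgraphOfAdj, Set.ncard_singleton, h2]
  norm_num

lemma exists_subDensity_eq_m1_verts_subset_support (hF : F ≠ ⊥) :
    ∃ H : F.Subgraph, 2 ≤ H.verts.ncard ∧ subDensity H = m1 F ∧ H.verts ⊆ H.support := by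
  obtain ⟨a, b, hab⟩ := ne_bot_iff_exists_adj.mp hF
  have : Nontrivial V := nontrivial_of_ne a b hab.ne
  obtain ⟨H, -, hH⟩ := exists_subDensity_eq_m1 (F := F)
  have hE : H.edgeSet.Nonempty := by
    rw [Set.nonempty_iff_ne_empty]
    intro hE
    have := one_le_m1 hab
    rw [← hH, subDensity, hE, Set.ncard_empty] at this
    norm_num at this
  have h2 : 2 ≤ (H.induce H.support).verts.ncard :=
    two_le_ncard_support hE
  refine ⟨H.induce H.support, h2, le_antisymm (subDensity_le_m1 _ h2)
    (hH ▸ subDensity_le_subDensity_induce_support H hE), ?_⟩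
  rintro x ⟨y, hxy⟩
  exact ⟨y, ⟨y, hxy⟩, ⟨x, hxy.symm⟩, hxy⟩

lemma subDensity_cone_eq_m1 {H : F.Subgraph} {u : V} (hu : ∀ x ∈ H.verts, F.Adj u x)
    (h2 : 2 ≤ H.verts.ncard) (hH : subDensity H = m1 F) : subDensity (H.cone u hu) = m1 F :=
  le_antisymm (subDensity_le_m1 _ (by rw [ncard_verts_cone]; omega))
    (hH ▸ subDensity_le_subDensity_cone H u hu h2)

end m1

theorem edge_outside_closed_neighborhood_general
    {V : Type*} [Fintype V] (F : SimpleGraph V) (u : V)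
    (hnone : ∀ H : F.Subgraph, u ∈ H.verts → subDensity H ≠ m1 F) :
    ∃ v w : V, F.Adj v w ∧
      (v ∉ insert u (F.neighborSet u) ∨ w ∉ insert u (F.neighborSet u)) := by
  by_contra! hN
  obtain rfl | hF := eq_or_ne F ⊥
  · exact hnone (SimpleGraph.singletonSubgraph ⊥ u) (Set.mem_singleton u) (by rw [subDensity_singletonSubgraph, m1_bot])
  obtain ⟨H, h2, hH, hsupp⟩ := exists_subDensity_eq_m1_verts_subset_support hF
  by_cases huH : u ∈ H.verts
  · exact hnone H huH hH
  have hu : ∀ x ∈ H.verts, F.Adj u x := by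
    intro x hx
    obtain ⟨y, hxy⟩ := hsupp hx
    exact ((hN x y (H.adj_sub hxy)).1).resolve_left (by rintro rfl; exact huH hx)
  exact hnone (H.cone u hu) (Set.mem_insert u _) (subDensity_cone_eq_m1 hu h2 hH)

/-- if `u` is a vertex of minimum degree of `F` and no subgraph of `F`
containing `u` has 1-density equal to `m₁(F)`, then `F` has an edge with at most one
endpoint in the closed neighbourhood `N_F[u]`. -/
theorem edge_outside_closed_neighborhood
    {V : Type*} [Fintype V] (F : SimpleGraph V) [DecidableRel F.Adj] (u : V)
    (hu : F.degree u = F.minDegree)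
    (hnone : ∀ H : F.Subgraph, u ∈ H.verts → subDensity H ≠ m1 F) :
    ∃ v w : V, F.Adj v w ∧
      (v ∉ insert u (F.neighborSet u) ∨ w ∉ insert u (F.neighborSet u)) :=
  edge_outside_closed_neighborhood_general F u hnone
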